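/- arXiv:2208.06307 — 2 statements merged into one kernel-verified Lean document; each statement's English description precedes it below -/
import Mathlib

section
/- (Laurent–Massart upper deviation) Let X_1,…,X_m be i.i.d. N(0, σ²) random variables. Then for every t > 0, P(Σ_i X_i² − m·σ² ≥ 2σ²·√(m·t) + 2σ²·t) ≤ exp(−t). -/
/-!
Chernoff's bound with the moment generating function of a squared centred Gaussian,
`E exp(u X²) = (1 - 2uv)^(-1/2)` for `2uv < 1`. With `s = √(mt)` and `c = m + 2s + 2t`, the
choice `u = (s + t) / (v c)` gives `1 - 2uv = m / c`, so the bound reads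
`exp(-(s + t)) · (1 + y + y²/2)^(m/2)` with `y = 2s/m`, and `1 + y + y²/2 ≤ exp y` turns it into
`exp(-t)`.
-/

open MeasureTheory ProbabilityTheory Real
open scoped NNReal

lemma mgf_sq_gaussianReal {v : ℝ≥0} {u : ℝ} (h : 2 * u * v < 1) :
    mgf (· ^ 2) (gaussianReal 0 v) u = (√(1 - 2 * u * v))⁻¹ := by
  rcases eq_or_ne v 0 with rfl | hv
  · simp [mgf, gaussianReal_zero_var]
  have hv' : (0 : ℝ) < v := by positivity
  have hc : 0 < 1 - 2 * u * v := by linarith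
  obtain ⟨b, hb, hbv⟩ : ∃ b : ℝ, 0 < b ∧ b * (2 * v) = 1 - 2 * u * v :=
    ⟨_, by positivity, div_mul_cancel₀ _ (by positivity)⟩
  have hdensity : ∀ x : ℝ, gaussianPDFReal 0 v x • rexp (u * x ^ 2)
      = (√(2 * π * v))⁻¹ * rexp (-b * x ^ 2) := by
    intro x
    rw [smul_eq_mul, gaussianPDFReal, mul_assoc, ← exp_add]
    congr 2
    field_simp
    linear_combination x ^ 2 * hbv
  rw [mgf, integral_gaussianReal_eq_integral_smul hv]
  simp_rw [hdensity]
  rw [integral_const_mul, integral_gaussian, ← sqrt_inv, ← sqrt_mul (by positivity), ← sqrt_inv,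
    ← hbv]
  field_simp

lemma integrable_exp_mul_sq_gaussianReal {v : ℝ≥0} {u : ℝ} (h : 2 * u * v < 1) :
    Integrable (fun x ↦ rexp (u * x ^ 2)) (gaussianReal 0 v) :=
  mgf_pos_iff.mp <| by
    rw [mgf_sq_gaussianReal h]
    have : 0 < 1 - 2 * u * v := by linarith
    positivity

section

variable {Ω ι : Type*} [MeasurableSpace Ω] {μ : Measure Ω} {v : ℝ≥0} {u : ℝ}

lemma mgf_sq_of_map_eq_gaussianReal {X : Ω → ℝ} (hX : AEMeasurable X μ)
    (hlaw : μ.map X = gaussianReal 0 v) (h : 2 * u * v < 1) :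
    mgf (fun ω ↦ X ω ^ 2) μ u = (√(1 - 2 * u * v))⁻¹ := by
  rw [← mgf_sq_gaussianReal h, ← hlaw, mgf_map hX (by fun_prop)]
  rfl

lemma integrable_exp_mul_sq_of_map_eq_gaussianReal {X : Ω → ℝ} (hX : AEMeasurable X μ)
    (hlaw : μ.map X = gaussianReal 0 v) (h : 2 * u * v < 1) :
    Integrable (fun ω ↦ rexp (u * X ω ^ 2)) μ :=
  (integrable_map_measure (g := fun x ↦ rexp (u * x ^ 2)) (by fun_prop) hX).mp
    (hlaw ▸ integrable_exp_mul_sq_gaussianReal h)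

variable [Fintype ι] {X : ι → Ω → ℝ}

lemma measureReal_sum_sq_ge_le (hmeas : ∀ i, Measurable (X i)) (hindep : iIndepFun X μ)
    (hlaw : ∀ i, μ.map (X i) = gaussianReal 0 v) (hu : 0 ≤ u) (h : 2 * u * v < 1) (ε : ℝ) :
    μ.real {ω | ε ≤ ∑ i, X i ω ^ 2} ≤
      rexp (-u * ε) * (√(1 - 2 * u * v))⁻¹ ^ Fintype.card ι := by
  have := hindep.isProbabilityMeasure
  set Y : ι → Ω → ℝ := fun i ω ↦ X i ω ^ 2
  have hYmeas : ∀ i, Measurable (Y i) := fun i ↦ (hmeas i).pow_const 2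
  have hYindep : iIndepFun Y μ := hindep.comp _ fun _ ↦ measurable_id.pow_const 2
  have hsum : ∀ ω, ∑ i, X i ω ^ 2 = (∑ i, Y i) ω := fun ω ↦ by simp [Y]
  have hmgf : mgf (∑ i, Y i) μ u = (√(1 - 2 * u * v))⁻¹ ^ Fintype.card ι := by
    rw [hYindep.mgf_sum hYmeas, Finset.prod_eq_pow_card fun i _ ↦
      mgf_sq_of_map_eq_gaussianReal (hmeas i).aemeasurable (hlaw i) h, Finset.card_univ]
  simp_rw [hsum, ← hmgf]
  exact measure_ge_le_exp_mul_mgf ε hu <| hYindep.integrable_exp_mul_sum hYmeas fun i _ ↦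
    integrable_exp_mul_sq_of_map_eq_gaussianReal (hmeas i).aemeasurable (hlaw i) h

end

lemma sqrt_one_add_pow_le_exp {m : ℕ} (hm : 0 < m) {t : ℝ} (ht : 0 ≤ t) :
    √(1 + 2 * √(m * t) / m + 2 * t / m) ^ m ≤ rexp √(m * t) := by
  have hmR : (m : ℝ) ≠ 0 := by positivity
  have hs0 := sqrt_nonneg (m * t)
  have hs2 := sq_sqrt (by positivity : (0 : ℝ) ≤ m * t)
  generalize √(m * t) = s at *
  calc √(1 + 2 * s / m + 2 * t / m) ^ m
      = √(1 + 2 * s / m + (2 * s / m) ^ 2 / 2) ^ m := by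
        congr 3
        field_simp
        linear_combination -hs2
    _ ≤ √(rexp (2 * s / m)) ^ m := by
        gcongr
        exact quadratic_le_exp_of_nonneg (by positivity)
    _ = rexp s := by
        rw [← exp_half, ← exp_nat_mul]
        field_simp

theorem stmt_5 {Ω : Type*} [MeasurableSpace Ω] (μ : Measure Ω) [IsProbabilityMeasure μ]
    (m : ℕ) (X : Fin m → Ω → ℝ) (v : NNReal) (hv : 0 < v)
    (hmeas : ∀ i, Measurable (X i))
    (hindep : iIndepFun X μ)
    (hgauss : ∀ i, μ.map (X i) = gaussianReal 0 v)
    (t : ℝ) (ht : 0 < t) :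
    μ {ω | (∑ i, X i ω ^ 2) - m * (v : ℝ) ≥
        2 * (v : ℝ) * Real.sqrt (m * t) + 2 * (v : ℝ) * t} ≤
      ENNReal.ofReal (Real.exp (-t)) := by
  have hv' : (0 : ℝ) < v := hv
  rcases Nat.eq_zero_or_pos m with rfl | hm
  · have : ¬ 0 ≥ 2 * (v : ℝ) * t := not_le.mpr (by positivity)
    simp [this]
  set s := √(m * t)
  set c : ℝ := m + 2 * s + 2 * t
  have hc : 0 < c := by positivity
  set u := (s + t) / (v * c)
  have huvc : u * (v * c) = s + t := div_mul_cancel₀ _ (by positivity)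
  have h2uv : 1 - 2 * u * v = m / c := by
    field_simp
    linear_combination -2 * huvc
  have hlt : 2 * u * v < 1 := by
    have : (0 : ℝ) < m / c := by positivity
    linarith
  have hset : {ω | (∑ i, X i ω ^ 2) - m * (v : ℝ) ≥ 2 * (v : ℝ) * s + 2 * (v : ℝ) * t} =
      {ω | v * c ≤ ∑ i, X i ω ^ 2} := by
    ext ω
    simp only [Set.mem_ofPred_eq, c]
    constructor <;> intro h <;> linarith
  rw [hset, ENNReal.le_ofReal_iff_toReal_le (measure_ne_top _ _) (exp_nonneg _)]
  calc μ.real {ω | v * c ≤ ∑ i, X i ω ^ 2}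
      ≤ rexp (-u * (v * c)) * (√(1 - 2 * u * v))⁻¹ ^ m := by
        simpa using measureReal_sum_sq_ge_le hmeas hindep hgauss (by positivity) hlt (v * c)
    _ = rexp (-(s + t)) * √(1 + 2 * s / m + 2 * t / m) ^ m := by
        rw [neg_mul, huvc, h2uv, ← sqrt_inv, inv_div, add_div, add_div, div_self (by positivity)]
    _ ≤ rexp (-(s + t)) * rexp s := by gcongr; exact sqrt_one_add_pow_le_exp hm ht.le
    _ = rexp (-t) := by rw [← exp_add]; ring_nf
end

section
/- (Gaussian product tail) Let x_1,…,x_P and y_1,…,y_P be 2P jointly independent real N(0,σ²) random variables. Then for all t > 0, P( |Σ_{i=1}^P x_i·y_i| ≥ t ) ≤ 2·exp( −t² / (4σ²(Pσ² + t/2)) ). -/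
/-!
If `X, Y` are independent `N(0, v)`, integrating out `Y` gives
`E[exp (θ X Y)] = E[exp (v θ² X² / 2)] = (1 - θ² v²)^(-1/2)` for `|θ| v < 1`.
The `P` products `x i * y i` are independent, so the moment generating function of their sum is
the `P`-th power of this, and the two one-sided Chernoff bounds at `θ = t / (2v(Pv + t))`,
together with `(1 - z)⁻¹ ≤ exp (z / (1 - z))`, give the claim.
-/

open MeasureTheory ProbabilityTheory Real
open scoped NNReal

namespace ProbabilityTheory

variable {Ω : Type*} [MeasurableSpace Ω] {μ : Measure Ω}

theorem iIndepFun.prodMk_sumElim {ι β : Type*} [Fintype ι] [MeasurableSpace β]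
    {f g : ι → Ω → β} (hf : ∀ i, Measurable (f i)) (hg : ∀ i, Measurable (g i))
    (h : iIndepFun (Sum.elim f g) μ) :
    iIndepFun (fun i ω ↦ (f i ω, g i ω)) μ := by
  have := h.isProbabilityMeasure
  have hfg : ∀ j, Measurable (Sum.elim f g j) := Sum.rec hf hg
  have _ j := Measure.isProbabilityMeasure_map (μ := μ) (hfg j).aemeasurable
  have hpair i : μ.map (fun ω ↦ (f i ω, g i ω)) = (μ.map (f i)).prod (μ.map (g i)) :=
    (indepFun_iff_map_prod_eq_prod_map_map (hf i).aemeasurable (hg i).aemeasurable).mp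
      (h.indepFun Sum.inl_ne_inr)
  have hsplit : (μ.map fun ω j ↦ Sum.elim f g j ω).map (MeasurableEquiv.sumPiEquivProdPi _) =
      (Measure.pi fun i ↦ μ.map (f i)).prod (Measure.pi fun i ↦ μ.map (g i)) := by
    rw [h.map_fun_eq_pi_map fun j ↦ (hfg j).aemeasurable]
    exact (measurePreserving_sumPiEquivProdPi _).map_eq
  rw [iIndepFun_iff_map_fun_eq_pi_map fun i ↦ ((hf i).prodMk (hg i)).aemeasurable]
  simp_rw [hpair]
  rw [← (measurePreserving_arrowProdEquivProdArrow β β ι _ _).symm.map_eq, ← hsplit,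
    Measure.map_map (by fun_prop) (by fun_prop), Measure.map_map (by fun_prop) (by fun_prop)]
  rfl

section Gaussian

variable {v : ℝ≥0}

lemma gaussianPDFReal_zero_mul_exp_mul_sq (hv : v ≠ 0) (a x : ℝ) :
    gaussianPDFReal 0 v x * exp (a * x ^ 2) =
      (√(2 * π * v))⁻¹ * exp (-((1 - 2 * a * v) / (2 * v)) * x ^ 2) := by
  have : (v : ℝ) ≠ 0 := by exact_mod_cast hv
  rw [gaussianPDFReal, mul_assoc, ← exp_add]
  congr 2
  field_simp
  ring

lemma integrable_exp_mul_sq_gaussianReal (hv : v ≠ 0) {a : ℝ} (ha : 2 * a * v < 1) :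
    Integrable (fun x ↦ exp (a * x ^ 2)) (gaussianReal 0 v) := by
  have hb : 0 < (1 - 2 * a * v) / (2 * v) := div_pos (by linarith) (by positivity)
  rw [gaussianReal_of_var_ne_zero _ hv, integrable_withDensity_iff_integrable_smul'
    (measurable_gaussianPDF 0 v) (ae_of_all _ fun _ ↦ gaussianPDF_lt_top)]
  simp_rw [toReal_gaussianPDF, smul_eq_mul, gaussianPDFReal_zero_mul_exp_mul_sq hv]
  exact (integrable_exp_neg_mul_sq hb).const_mul _

lemma integral_exp_mul_sq_gaussianReal (hv : v ≠ 0) {a : ℝ} (ha : 2 * a * v < 1) :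
    ∫ x, exp (a * x ^ 2) ∂gaussianReal 0 v = (√(1 - 2 * a * v))⁻¹ := by
  have ha' : 0 < 1 - 2 * a * v := by linarith
  rw [integral_gaussianReal_eq_integral_smul hv]
  simp_rw [smul_eq_mul, gaussianPDFReal_zero_mul_exp_mul_sq hv]
  have : √(2 * π * v) ≠ 0 := by positivity
  rw [integral_const_mul, integral_gaussian, div_div_eq_mul_div, sqrt_div' _ ha'.le,
    show π * (2 * v) = 2 * π * v by ring]
  field_simp

lemma integral_exp_mul_gaussianReal_zero (s : ℝ) :
    ∫ y, exp (s * y) ∂gaussianReal 0 v = exp (v * s ^ 2 / 2) := by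
  simpa [mgf] using congrFun (mgf_fun_id_gaussianReal (μ := 0) (v := v)) s

lemma integral_exp_mul_mul_gaussianReal_left (θ x : ℝ) :
    ∫ y, exp (θ * (x * y)) ∂gaussianReal 0 v = exp (v * θ ^ 2 / 2 * x ^ 2) := by
  simp_rw [← mul_assoc, integral_exp_mul_gaussianReal_zero]
  ring_nf

lemma integrable_exp_mul_mul_gaussianReal_prod (hv : v ≠ 0) {θ : ℝ} (hθ : θ ^ 2 * v ^ 2 < 1) :
    Integrable (fun p : ℝ × ℝ ↦ exp (θ * (p.1 * p.2)))
      ((gaussianReal 0 v).prod (gaussianReal 0 v)) := by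
  refine (integrable_prod_iff (by fun_prop)).mpr ⟨ae_of_all _ fun x ↦ ?_, ?_⟩
  · simpa only [← mul_assoc] using integrable_exp_mul_gaussianReal (μ := 0) (v := v) (θ * x)
  · simp_rw [norm_of_nonneg (exp_pos _).le, integral_exp_mul_mul_gaussianReal_left]
    exact integrable_exp_mul_sq_gaussianReal hv (by linarith)

lemma integral_exp_mul_mul_gaussianReal_prod (hv : v ≠ 0) {θ : ℝ} (hθ : θ ^ 2 * v ^ 2 < 1) :
    ∫ p, exp (θ * (p.1 * p.2)) ∂(gaussianReal 0 v).prod (gaussianReal 0 v) =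
      (√(1 - θ ^ 2 * v ^ 2))⁻¹ := by
  rw [integral_prod _ (integrable_exp_mul_mul_gaussianReal_prod hv hθ)]
  simp_rw [integral_exp_mul_mul_gaussianReal_left]
  rw [integral_exp_mul_sq_gaussianReal hv (by linarith)]
  ring_nf

variable [IsFiniteMeasure μ] {X Y : Ω → ℝ}

lemma IndepFun.map_prodMk_eq_gaussianReal_prod (hX : Measurable X) (hY : Measurable Y)
    (hXY : IndepFun X Y μ) (hXlaw : μ.map X = gaussianReal 0 v)
    (hYlaw : μ.map Y = gaussianReal 0 v) :
    μ.map (fun ω ↦ (X ω, Y ω)) = (gaussianReal 0 v).prod (gaussianReal 0 v) := by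
  rw [(indepFun_iff_map_prod_eq_prod_map_map hX.aemeasurable hY.aemeasurable).mp hXY,
    hXlaw, hYlaw]

lemma IndepFun.integrable_exp_mul_mul_of_gaussianReal (hX : Measurable X) (hY : Measurable Y)
    (hXY : IndepFun X Y μ) (hXlaw : μ.map X = gaussianReal 0 v)
    (hYlaw : μ.map Y = gaussianReal 0 v) (hv : v ≠ 0) {θ : ℝ} (hθ : θ ^ 2 * v ^ 2 < 1) :
    Integrable (fun ω ↦ exp (θ * (X * Y) ω)) μ := by
  have h := integrable_exp_mul_mul_gaussianReal_prod hv hθ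
  rw [← hXY.map_prodMk_eq_gaussianReal_prod hX hY hXlaw hYlaw] at h
  exact h.comp_measurable (hX.prodMk hY)

lemma IndepFun.mgf_mul_of_gaussianReal (hX : Measurable X) (hY : Measurable Y)
    (hXY : IndepFun X Y μ) (hXlaw : μ.map X = gaussianReal 0 v)
    (hYlaw : μ.map Y = gaussianReal 0 v) (hv : v ≠ 0) {θ : ℝ} (hθ : θ ^ 2 * v ^ 2 < 1) :
    mgf (X * Y) μ θ = (√(1 - θ ^ 2 * v ^ 2))⁻¹ := by
  rw [← integral_exp_mul_mul_gaussianReal_prod hv hθ,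
    ← hXY.map_prodMk_eq_gaussianReal_prod hX hY hXlaw hYlaw,
    integral_map (hX.prodMk hY).aemeasurable (by fun_prop)]
  rfl

end Gaussian

lemma measureReal_abs_ge_le_exp_mul_mgf_add [IsFiniteMeasure μ] {X : Ω → ℝ} {θ : ℝ} (ε : ℝ)
    (hθ : 0 ≤ θ)    (h_int : Integrable (fun ω ↦ exp (θ * X ω)) μ)
    (h_int_neg : Integrable (fun ω ↦ exp (-θ * X ω)) μ) :
    μ.real {ω | ε ≤ |X ω|} ≤ exp (-θ * ε) * (mgf X μ θ + mgf X μ (-θ)) := by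
  have hsplit : {ω | ε ≤ |X ω|} ⊆ {ω | ε ≤ X ω} ∪ {ω | X ω ≤ -ε} := fun ω (hω : ε ≤ |X ω|) ↦
    (le_abs'.mp hω).symm
  calc μ.real {ω | ε ≤ |X ω|}
      ≤ μ.real {ω | ε ≤ X ω} + μ.real {ω | X ω ≤ -ε} :=
        (measureReal_mono hsplit).trans (measureReal_union_le _ _)
    _ ≤ exp (-θ * ε) * mgf X μ θ + exp (-(-θ) * -ε) * mgf X μ (-θ) :=
        add_le_add (measure_ge_le_exp_mul_mgf ε hθ h_int)
          (measure_le_le_exp_mul_mgf (-ε) (neg_nonpos.mpr hθ) h_int_neg)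
    _ = exp (-θ * ε) * (mgf X μ θ + mgf X μ (-θ)) := by ring_nf

end ProbabilityTheory

lemma inv_sqrt_one_sub_le_exp {z : ℝ} (hz : z < 1) : (√(1 - z))⁻¹ ≤ exp (z / (2 * (1 - z))) := by
  have h : 0 < 1 - z := by linarith
  rw [← sqrt_inv, sqrt_le_iff, sq, ← exp_add, ← add_div, ← two_mul,
    mul_div_mul_left _ _ two_ne_zero]
  refine ⟨(exp_pos _).le, ?_⟩
  calc (1 - z)⁻¹ = z / (1 - z) + 1 := by field_simp; ring
    _ ≤ exp (z / (1 - z)) := add_one_le_exp _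

section ChernoffParameter
variable {n v t θ : ℝ} (hn : 0 ≤ n) (hv : 0 < v) (ht : 0 < t)
  (hθ : θ = t / (2 * v * (n * v + t)))
include hn hv ht hθ

lemma sq_mul_sq_lt_one_of_eq_div : θ ^ 2 * v ^ 2 < 1 := by
  have h : θ * v = t / (2 * (n * v + t)) := by rw [hθ]; field_simp
  rw [← mul_pow, h, div_pow, div_lt_one (by positivity)]
  nlinarith [mul_nonneg hn hv.le]

lemma neg_mul_add_mul_le_of_eq_div :
    -θ * t + n * (θ ^ 2 * v ^ 2 / (2 * (1 - θ ^ 2 * v ^ 2)))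
      ≤ -t ^ 2 / (4 * v * (n * v + t / 2)) := by
  have hA : 0 ≤ n * v := by positivity
  have h1 : 1 - θ ^ 2 * v ^ 2 =
      (2 * n * v + t) * (2 * n * v + 3 * t) / (4 * (n * v + t) ^ 2) := by
    rw [hθ]; field_simp; ring
  rw [h1, hθ]
  field_simp
  nlinarith [mul_nonneg hA ht.le]

end ChernoffParameter

lemma exp_neg_mul_mul_inv_sqrt_pow_le {v t θ : ℝ} (P : ℕ) (hv : 0 < v) (ht : 0 < t)
    (hθ : θ = t / (2 * v * (P * v + t))) :
    exp (-θ * t) * (√(1 - θ ^ 2 * v ^ 2))⁻¹ ^ P ≤ exp (-t ^ 2 / (4 * v * (P * v + t / 2))) := by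
  have hP : (0 : ℝ) ≤ P := P.cast_nonneg
  calc exp (-θ * t) * (√(1 - θ ^ 2 * v ^ 2))⁻¹ ^ P
      ≤ exp (-θ * t) * exp (θ ^ 2 * v ^ 2 / (2 * (1 - θ ^ 2 * v ^ 2))) ^ P := by
        gcongr
        exact inv_sqrt_one_sub_le_exp (sq_mul_sq_lt_one_of_eq_div hP hv ht hθ)
    _ = exp (-θ * t + P * (θ ^ 2 * v ^ 2 / (2 * (1 - θ ^ 2 * v ^ 2)))) := by
        rw [exp_add, exp_nat_mul]
    _ ≤ exp (-t ^ 2 / (4 * v * (P * v + t / 2))) :=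
        exp_le_exp.mpr (neg_mul_add_mul_le_of_eq_div hP hv ht hθ)

theorem stmt_8 {Ω : Type*} [MeasurableSpace Ω] (μ : Measure Ω) [IsProbabilityMeasure μ]
    (P : ℕ) (x y : Fin P → Ω → ℝ) (v : NNReal) (hv : 0 < v)
    (hmeas : ∀ i, Measurable (x i)) (hmeas' : ∀ i, Measurable (y i))
    (hindep : iIndepFun (Sum.elim x y) μ)
    (hgauss : ∀ i, μ.map (x i) = gaussianReal 0 v)
    (hgauss' : ∀ i, μ.map (y i) = gaussianReal 0 v)
    (t : ℝ) (ht : 0 < t) :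
    μ {ω | |∑ i, x i ω * y i ω| ≥ t} ≤
      ENNReal.ofReal (2 * Real.exp (-t ^ 2 / (4 * (v : ℝ) * (P * (v : ℝ) + t / 2)))) := by
  set θ : ℝ := t / (2 * v * (P * v + t)) with hθ
  have hθv : θ ^ 2 * v ^ 2 < 1 := sq_mul_sq_lt_one_of_eq_div P.cast_nonneg hv ht hθ
  have hpair i : IndepFun (x i) (y i) μ := hindep.indepFun Sum.inl_ne_inr
  have hprod : iIndepFun (fun i ↦ x i * y i) μ :=
    (hindep.prodMk_sumElim hmeas hmeas').comp _ fun _ ↦ measurable_fst.mul measurable_snd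
  have hint (s : ℝ) (hs : s ^ 2 * v ^ 2 < 1) :
      Integrable (fun ω ↦ exp (s * (∑ i, x i * y i) ω)) μ :=
    hprod.integrable_exp_mul_sum (fun i ↦ (hmeas i).mul (hmeas' i)) fun i _ ↦
      (hpair i).integrable_exp_mul_mul_of_gaussianReal (hmeas i) (hmeas' i) (hgauss i)
        (hgauss' i) hv.ne' hs
  have hmgf (s : ℝ) (hs : s ^ 2 * v ^ 2 < 1) :
      mgf (∑ i, x i * y i) μ s = (√(1 - s ^ 2 * v ^ 2))⁻¹ ^ P := by
    rw [hprod.mgf_sum (fun i ↦ (hmeas i).mul (hmeas' i)), Finset.prod_congr rfl fun i _ ↦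
      (hpair i).mgf_mul_of_gaussianReal (hmeas i) (hmeas' i) (hgauss i) (hgauss' i) hv.ne' hs]
    simp
  have hθv' : (-θ) ^ 2 * v ^ 2 < 1 := by rwa [neg_sq]
  have hchernoff := measureReal_abs_ge_le_exp_mul_mgf_add t (by positivity) (hint θ hθv)
    (hint (-θ) hθv')
  rw [hmgf θ hθv, hmgf (-θ) hθv', neg_sq] at hchernoff
  have hevent : {ω | |∑ i, x i ω * y i ω| ≥ t} = {ω | t ≤ |(∑ i, x i * y i) ω|} := by
    simp [Finset.sum_apply]
  rw [hevent, ← ofReal_measureReal]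
  refine ENNReal.ofReal_le_ofReal (hchernoff.trans ?_)
  rw [← two_mul, mul_left_comm]
  exact mul_le_mul_of_nonneg_left (exp_neg_mul_mul_inv_sqrt_pow_le P hv ht hθ) zero_le_two
end
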